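/- For every natural number n, there exists a positive word w in the generators σ1, σ2, σ3 of the braid group on 4 strands such that w represents (σ1σ2σ3)^{2n+1}, w contains exactly 5n+2 letters from {σ1, σ3} and exactly n+1 letters equal to σ2. -/

import Mathlib

/-!
Write δ = σ₁σ₂σ₃. Conjugation by δ sends σ₁ ↦ σ₂ ↦ σ₃ and conjugation by δ² swaps σ₁ and σ₃,
so for every n some odd letter a satisfies a·δ^(2n+1) = δ^(2n+1)·σ₂. Since
δ² = σ₂·σ₁σ₃σ₂σ₃σ₃, this gives δ^(2n+3) = a·δ^(2n+1)·σ₁σ₃σ₂σ₃σ₃: a word for δ^(2n+1) grows into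
one for δ^(2n+3) by five odd letters and a single σ₂.
-/

/-- The braid relations on `n` generators. -/
def braidRels (n : ℕ) : Set (FreeGroup (Fin n)) :=
  { r | (∃ i j : Fin n, (i : ℕ) + 2 ≤ (j : ℕ) ∧
          r = FreeGroup.of i * FreeGroup.of j * (FreeGroup.of i)⁻¹ * (FreeGroup.of j)⁻¹) ∨
        (∃ i j : Fin n, (j : ℕ) = (i : ℕ) + 1 ∧
          r = FreeGroup.of i * FreeGroup.of j * FreeGroup.of i *
              (FreeGroup.of j)⁻¹ * (FreeGroup.of i)⁻¹ * (FreeGroup.of j)⁻¹) }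

/-- The braid group on 4 strands, presented by generators `σ₁, σ₂, σ₃` and the Artin relations. -/
abbrev B4 := PresentedGroup (braidRels 3)

/-- The Artin generator `σ_{i+1}` of the braid group on 4 strands. -/
def σ (i : Fin 3) : B4 := PresentedGroup.of i

theorem σ_commute {i j : Fin 3} (h : (i : ℕ) + 2 ≤ j) : Commute (σ i) (σ j) := by
  show PresentedGroup.mk _ (FreeGroup.of i * FreeGroup.of j) =
    PresentedGroup.mk _ (FreeGroup.of j * FreeGroup.of i)
  exact PresentedGroup.mk_eq_mk_of_mul_inv_mem (Or.inl ⟨i, j, h, by group⟩)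

theorem σ_braid {i j : Fin 3} (h : (j : ℕ) = i + 1) : σ i * σ j * σ i = σ j * σ i * σ j := by
  show PresentedGroup.mk _ (FreeGroup.of i * FreeGroup.of j * FreeGroup.of i) =
    PresentedGroup.mk _ (FreeGroup.of j * FreeGroup.of i * FreeGroup.of j)
  exact PresentedGroup.mk_eq_mk_of_mul_inv_mem (Or.inr ⟨i, j, h, by group⟩)

theorem σ_braid_assoc {i j : Fin 3} (h : (j : ℕ) = i + 1) :
    σ i * (σ j * σ i) = σ j * (σ i * σ j) := by
  simp only [← mul_assoc, σ_braid h]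

theorem σ_braid_left_comm {i j : Fin 3} (h : (j : ℕ) = i + 1) (x : B4) :
    σ i * (σ j * (σ i * x)) = σ j * (σ i * (σ j * x)) := by
  simp only [← mul_assoc, σ_braid h]

section

local notation "δ" => σ 0 * σ 1 * σ 2

theorem delta_mul_σ_zero : δ * σ 0 = σ 1 * δ := by
  simp only [mul_assoc]
  rw [← (σ_commute (i := 0) (j := 2) (by decide)).eq, σ_braid_left_comm (by decide)]

theorem delta_mul_σ_one : δ * σ 1 = σ 2 * δ := by
  simp only [mul_assoc]
  rw [σ_braid_assoc (i := 1) (j := 2) (by decide),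
    (σ_commute (i := 0) (j := 2) (by decide)).left_comm]

theorem delta_sq_mul_σ_zero : δ ^ 2 * σ 0 = σ 2 * δ ^ 2 := by
  rw [sq, mul_assoc, delta_mul_σ_zero, ← mul_assoc, delta_mul_σ_one, mul_assoc]

theorem delta_sq_mul_σ_two : δ ^ 2 * σ 2 = σ 0 * δ ^ 2 := by
  have h_mul_σ_two : δ ^ 2 = σ 0 * σ 1 * σ 0 * σ 2 * σ 1 * σ 2 := by
    simp only [sq, mul_assoc]
    rw [(σ_commute (i := 0) (j := 2) (by decide)).symm.left_comm]
  have h_σ_zero_mul : δ ^ 2 = σ 0 * (σ 0 * σ 1 * σ 0 * σ 2 * σ 1) := by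
    rw [h_mul_σ_two]
    simp only [mul_assoc]
    rw [← σ_braid_assoc (i := 1) (j := 2) (by decide),
      ← σ_braid_left_comm (i := 0) (j := 1) (by decide)]
  calc δ ^ 2 * σ 2 = σ 0 * (σ 0 * σ 1 * σ 0 * σ 2 * σ 1) * σ 2 := by rw [h_σ_zero_mul]
    _ = σ 0 * δ ^ 2 := by rw [h_mul_σ_two]; simp only [mul_assoc]

theorem delta_sq_eq : δ ^ 2 = σ 1 * σ 0 * σ 2 * σ 1 * σ 2 * σ 2 := by
  simp only [sq, mul_assoc]
  rw [(σ_commute (i := 0) (j := 2) (by decide)).symm.left_comm,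
    σ_braid_left_comm (i := 0) (j := 1) (by decide),
    σ_braid_left_comm (i := 1) (j := 2) (by decide)]

theorem delta_sq_mul_σ {a : Fin 3} (ha : a ≠ 1) : δ ^ 2 * σ a = σ a.rev * δ ^ 2 := by
  fin_cases a
  · exact delta_sq_mul_σ_zero
  · exact absurd rfl ha
  · exact delta_sq_mul_σ_two

theorem exists_σ_mul_delta_pow_odd (n : ℕ) :
    ∃ a : Fin 3, a ≠ 1 ∧ σ a * δ ^ (2 * n + 1) = δ ^ (2 * n + 1) * σ 1 := by
  induction n with
  | zero => exact ⟨2, by decide, by rw [pow_one, delta_mul_σ_one]⟩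
  | succ n ih =>
    obtain ⟨a, ha, hconj⟩ := ih
    refine ⟨a.rev, by fin_cases a <;> simp_all, ?_⟩
    rw [show 2 * (n + 1) + 1 = 2 + (2 * n + 1) by ring, pow_add, ← mul_assoc,
      ← delta_sq_mul_σ ha, mul_assoc (δ ^ 2), hconj, ← mul_assoc]

end

/-- For every `n`, there is a positive 4-braid word representing `(σ1σ2σ3)^{2n+1}`
with exactly `5n+2` odd letters (`σ1, σ3`) and exactly `n+1` letters `σ2`. -/
theorem stmt5 (n : ℕ) :
    ∃ w : List (Fin 3),
      (w.map σ).prod = (σ 0 * σ 1 * σ 2) ^ (2 * n + 1) ∧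
      w.count 0 + w.count 2 = 5 * n + 2 ∧
      w.count 1 = n + 1 := by
  induction n with
  | zero => exact ⟨[0, 1, 2], by simp [mul_assoc], rfl, rfl⟩
  | succ n ih =>
    obtain ⟨w, hw, hodd, heven⟩ := ih
    obtain ⟨a, ha, hconj⟩ := exists_σ_mul_delta_pow_odd n
    refine ⟨a :: w ++ [0, 2, 1, 2, 2], ?_, ?_⟩
    · calc ((a :: w ++ [0, 2, 1, 2, 2]).map σ).prod
          = σ a * (σ 0 * σ 1 * σ 2) ^ (2 * n + 1) * (σ 0 * σ 2 * σ 1 * σ 2 * σ 2) := by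
            simp [hw, mul_assoc]
        _ = (σ 0 * σ 1 * σ 2) ^ (2 * n + 1) * (σ 0 * σ 1 * σ 2) ^ 2 := by
            rw [hconj, delta_sq_eq]; group
        _ = (σ 0 * σ 1 * σ 2) ^ (2 * (n + 1) + 1) := by rw [← pow_add]; ring_nf
    · simp only [List.cons_append, List.count_cons, List.count_append, List.count_nil]
      fin_cases a <;> grind
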